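/- arXiv:1503.02200 — 3 statements merged into one kernel-verified Lean document; each statement's English description precedes it below -/
import Mathlib

section
/- Let m ≥ 1 and let v be uniformly distributed on {1/a : a ∈ {1,...,m}}. Then E[v] = H_m/m, where H_m = ∑_{a=1}^m 1/a is the m-th harmonic number. Consequently, for any price p > 0, the ratio (p·Pr[v ≥ p])/E[v] is at most 1/H_m, which tends to 0 as m → ∞. -/
/-!
Whatever the price `p`, at most `1 / p` of the values `1 / a` are `≥ p`, so the revenue
`p · Pr[v ≥ p]` is at most `1 / m`, against the expected value `H_m / m`. The harmonic numbers
diverge since `log (m + 1) ≤ H_m`.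
-/

open Finset Filter

theorem sum_Icc_one_div_eq_harmonic (m : ℕ) :
    ∑ a ∈ Icc 1 m, (1 : ℝ) / a = harmonic m := by
  simp [harmonic_eq_sum_Icc, one_div]

theorem tendsto_harmonic_atTop : Tendsto (fun m : ℕ => (harmonic m : ℝ)) atTop atTop :=
  tendsto_atTop_mono log_add_one_le_harmonic <|
    Real.tendsto_log_atTop.comp <| tendsto_natCast_atTop_atTop.comp (tendsto_add_atTop_nat 1)

theorem mul_card_filter_le_one_div_le_one (s : Finset ℕ) {p : ℝ} (hp : 0 < p) :
    p * (s.filter fun a : ℕ => p ≤ 1 / (a : ℝ)).card ≤ 1 := by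
  have hsub : s.filter (fun a : ℕ => p ≤ 1 / (a : ℝ)) ⊆ Icc 1 ⌊1 / p⌋₊ := by
    intro a ha
    obtain ⟨-, hpa⟩ := mem_filter.mp ha
    have ha0 : (0 : ℝ) < a := by
      by_contra! h
      have : (1 : ℝ) / a ≤ 0 := div_nonpos_of_nonneg_of_nonpos zero_le_one h
      linarith
    refine mem_Icc.mpr ⟨by exact_mod_cast ha0, Nat.le_floor ?_⟩
    rw [le_div_iff₀ hp]
    rwa [le_div_iff₀ ha0, mul_comm] at hpa
  calc p * (s.filter fun a : ℕ => p ≤ 1 / (a : ℝ)).card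
      ≤ p * ⌊1 / p⌋₊ := by
        gcongr
        simpa using card_le_card hsub
    _ ≤ p * (1 / p) := by gcongr; exact Nat.floor_le (by positivity)
    _ = 1 := mul_one_div_cancel hp.ne'

/-- For v uniform on {1/a : a ∈ {1,...,m}}, E[v] = H_m/m, the posted-price revenue-to-welfare
ratio is at most 1/H_m, and 1/H_m → 0 as m → ∞. -/
theorem stmt1 :
    (∀ m : ℕ, 1 ≤ m → ∀ H : ℝ, H = ∑ a ∈ Finset.Icc 1 m, (1 : ℝ) / a →
      ((∑ a ∈ Finset.Icc 1 m, ((1 : ℝ) / m) * ((1 : ℝ) / a)) = H / m ∧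
       ∀ p : ℝ, 0 < p →
         (p * (((Finset.Icc 1 m).filter (fun a : ℕ => p ≤ 1 / (a : ℝ))).card : ℝ) / m) / (H / m)
           ≤ 1 / H)) ∧
    Filter.Tendsto (fun m : ℕ => 1 / ∑ a ∈ Finset.Icc 1 m, (1 : ℝ) / a)
      Filter.atTop (nhds 0) := by
  refine ⟨?_, by
    simp_rw [sum_Icc_one_div_eq_harmonic, one_div]
    exact tendsto_harmonic_atTop.inv_tendsto_atTop⟩
  rintro m hm H rfl
  rw [sum_Icc_one_div_eq_harmonic]
  refine ⟨?_, fun p hp => ?_⟩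
  · rw [← mul_sum, sum_Icc_one_div_eq_harmonic]
    ring
  · have hm0 : (m : ℝ) ≠ 0 := by positivity
    have hH0 : (0 : ℝ) < harmonic m := by exact_mod_cast harmonic_pos (by omega)
    rw [div_div_div_cancel_right₀ hm0]
    exact div_le_div_of_nonneg_right (mul_card_filter_le_one_div_le_one _ hp) hH0.le
end

section
/- Let m ≥ 2, let (v₁, v₂) be distributed so that (v₁,v₂) = (1/a, 1/a) with probability 1/m for each a ∈ {1,...,m}. For any prices p₁, p₂ > 0, the expected revenue of the sequential mechanism that offers p₁ to buyer 1 and, if buyer 1 rejects, offers p₂ to buyer 2, is at most 2/m, while the expected optimal social welfare E[max(v₁,v₂)] equals H_m/m. Hence the ratio of the mechanism's revenue to the optimal social welfare is at most 2/H_m. -/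
lemma price_sum_le_one (m : ℕ) (p : ℝ) (hp : 0 < p) :
    (∑ a ∈ Finset.Icc 1 m, (if p ≤ 1 / (a : ℝ) then p else 0)) ≤ 1 := by
  classical
  have hsub : (Finset.Icc 1 m).filter (fun a : ℕ => p ≤ 1 / (a : ℝ)) ⊆
      Finset.Icc 1 ⌊1 / p⌋₊ := by
    intro a ha
    simp only [Finset.mem_filter, Finset.mem_Icc] at ha ⊢
    obtain ⟨⟨h1, _⟩, hle⟩ := ha
    refine ⟨h1, Nat.le_floor ?_⟩
    have hapos : (0:ℝ) < a := by positivity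
    rw [le_div_iff₀ hp]
    rw [le_div_iff₀ hapos] at hle
    nlinarith
  calc (∑ a ∈ Finset.Icc 1 m, (if p ≤ 1 / (a : ℝ) then p else 0))
      = ∑ _a ∈ (Finset.Icc 1 m).filter (fun a : ℕ => p ≤ 1 / (a : ℝ)), p :=
        (Finset.sum_filter _ _).symm
    _ = ((Finset.Icc 1 m).filter (fun a : ℕ => p ≤ 1 / (a : ℝ))).card * p := by
        rw [Finset.sum_const, nsmul_eq_mul]
    _ ≤ (⌊1 / p⌋₊ : ℝ) * p := by
        have hc := Finset.card_le_card hsub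
        have : ((Finset.Icc 1 m).filter (fun a : ℕ => p ≤ 1 / (a : ℝ))).card ≤ ⌊1 / p⌋₊ := by
          simpa [Nat.card_Icc] using hc
        exact mul_le_mul_of_nonneg_right (by exact_mod_cast this) hp.le
    _ ≤ (1 / p) * p := mul_le_mul_of_nonneg_right (Nat.floor_le (by positivity)) hp.le
    _ = 1 := by field_simp

/-- Two perfectly correlated buyers with common valuation 1/a, a uniform on {1,...,m}.
The sequential mechanism offering p₁ to buyer 1 and (upon rejection) p₂ to buyer 2 earns at
most 2/m in expectation, while E[max(v₁,v₂)] = H_m/m; hence the ratio is at most 2/H_m. -/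
theorem stmt2 (m : ℕ) (hm : 2 ≤ m) (p₁ p₂ : ℝ) (hp₁ : 0 < p₁) (hp₂ : 0 < p₂)
    (H : ℝ) (hH : H = ∑ a ∈ Finset.Icc 1 m, (1 : ℝ) / a)
    (RM : ℝ)
    (hRM : RM = ∑ a ∈ Finset.Icc 1 m, (1 : ℝ) / m *
      (if p₁ ≤ 1 / (a : ℝ) then p₁ else if p₂ ≤ 1 / (a : ℝ) then p₂ else 0)) :
    RM ≤ 2 / m ∧
    (∑ a ∈ Finset.Icc 1 m, (1 : ℝ) / m * max (1 / (a : ℝ)) (1 / (a : ℝ))) = H / m ∧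
    RM / (H / m) ≤ 2 / H := by
  have hm0 : (0:ℝ) < m := by positivity
  have hmain : RM ≤ 2 / m := by
    rw [hRM, ← Finset.mul_sum]
    have hptw : ∀ a ∈ Finset.Icc 1 m,
        (if p₁ ≤ 1 / (a : ℝ) then p₁ else if p₂ ≤ 1 / (a : ℝ) then p₂ else 0) ≤
        (if p₁ ≤ 1 / (a : ℝ) then p₁ else 0) + (if p₂ ≤ 1 / (a : ℝ) then p₂ else 0) := by
      intro a _
      split_ifs <;> simp_all <;> positivity
    have hsum : (∑ a ∈ Finset.Icc 1 m,
        (if p₁ ≤ 1 / (a : ℝ) then p₁ else if p₂ ≤ 1 / (a : ℝ) then p₂ else 0)) ≤ 2 := by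
      calc _ ≤ ∑ a ∈ Finset.Icc 1 m,
            ((if p₁ ≤ 1 / (a : ℝ) then p₁ else 0) + (if p₂ ≤ 1 / (a : ℝ) then p₂ else 0)) :=
              Finset.sum_le_sum hptw
        _ = (∑ a ∈ Finset.Icc 1 m, (if p₁ ≤ 1 / (a : ℝ) then p₁ else 0)) +
            (∑ a ∈ Finset.Icc 1 m, (if p₂ ≤ 1 / (a : ℝ) then p₂ else 0)) :=
              Finset.sum_add_distrib
        _ ≤ 1 + 1 := add_le_add (price_sum_le_one m p₁ hp₁) (price_sum_le_one m p₂ hp₂)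
        _ = 2 := by norm_num
    calc (1:ℝ)/m * ∑ a ∈ Finset.Icc 1 m,
          (if p₁ ≤ 1 / (a : ℝ) then p₁ else if p₂ ≤ 1 / (a : ℝ) then p₂ else 0)
        ≤ 1/m * 2 := by
          apply mul_le_mul_of_nonneg_left hsum (by positivity)
      _ = 2 / m := by ring
  have hwelf : (∑ a ∈ Finset.Icc 1 m, (1 : ℝ) / m * max (1 / (a : ℝ)) (1 / (a : ℝ))) = H / m := by
    simp only [max_self, hH, Finset.sum_div]
    apply Finset.sum_congr rfl; intro a _; ring
  have hHpos : 0 < H := by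
    rw [hH]
    apply Finset.sum_pos
    · intro a ha
      simp only [Finset.mem_Icc] at ha
      have ha1 : 1 ≤ a := ha.1
      have : (0:ℝ) < a := by exact_mod_cast Nat.lt_of_lt_of_le Nat.zero_lt_one ha1
      positivity
    · exact ⟨1, by simp [Finset.mem_Icc]; omega⟩
  refine ⟨hmain, hwelf, ?_⟩
  rw [div_div_eq_mul_div, div_le_div_iff₀ (by positivity) hHpos]
  calc RM * m * H ≤ (2/m) * m * H := by
        apply mul_le_mul_of_nonneg_right (mul_le_mul_of_nonneg_right hmain hm0.le) hHpos.le
    _ = 2 * (H * m) / m := by ring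
    _ = 2 * (H / m * m) := by ring
    _ = 2 * H := by field_simp
end

section
/- Let n ≥ 2 and consider the distribution π on {0,1}^{n+2} generated as follows: draw v' ∈ {0,1} from a distribution with both outcomes of positive probability; independently for each i ∈ [n] draw v_i from a distribution π^{i,v'} (depending on v') with both outcomes of positive probability, where the 2n distributions π^{i,b} are pairwise distinct; output (v_1,...,v_n, v', v'). Then π is 1-dimensionally dependent (for each coordinate i ≤ n the conditional distribution of v_i given all other coordinates depends only on coordinate n+1, and coordinates n+1, n+2 determine each other), but π is not a local Markov random field with respect to any graph on n+2 vertices in which every vertex has degree less than n/2. -/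
/-- Conditional probability that coordinate i equals b, given the other coordinates of v. -/
noncomputable def condP {N : ℕ} (π : (Fin N → Bool) → ℝ) (i : Fin N)
    (v : Fin N → Bool) (b : Bool) : ℝ :=
  π (Function.update v i b) /
    (π (Function.update v i true) + π (Function.update v i false))

/-- The distribution on {0,1}^{n+2} generated by drawing v' ∈ {0,1} (both outcomes positive),
drawing each v_i from a distribution π^{i,v'} depending on v' (all 2n distributions distinct,
both outcomes positive), and outputting (v_1,...,v_n,v',v') is 1-dimensionally dependent
(each coordinate's conditional law depends only on coordinate n+1, and coordinates n+1, n+2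
determine each other), but is not a local Markov random field w.r.t. any graph in which every
vertex has degree less than n/2. -/
theorem stmt19 (n : ℕ) (hn : 2 ≤ n)
    (pv : Bool → ℝ) (hpv : ∀ b, 0 < pv b) (hpv1 : pv true + pv false = 1)
    (q : Fin n → Bool → Bool → ℝ)
    (hq : ∀ i b b', 0 < q i b b') (hq1 : ∀ i b, q i b true + q i b false = 1)
    (hdist : ∀ (i j : Fin n) (b b' : Bool), (i, b) ≠ (j, b') → q i b ≠ q j b')
    (i₁ i₂ : Fin (n + 2)) (hi₁ : (i₁ : ℕ) = n) (hi₂ : (i₂ : ℕ) = n + 1)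
    (π : (Fin (n + 2) → Bool) → ℝ)
    (hπ : ∀ v, π v = if v i₁ = v i₂ then
        pv (v i₁) * ∏ i : Fin n, q i (v i₁) (v (Fin.castLE (by omega) i)) else 0) :
    -- each of the first n coordinates depends only on coordinate n+1
    (∀ i : Fin n, ∀ v w : Fin (n + 2) → Bool, 0 < π v → 0 < π w → v i₁ = w i₁ →
      ∀ b, condP π (Fin.castLE (by omega) i) v b = condP π (Fin.castLE (by omega) i) w b) ∧
    -- coordinates n+1 and n+2 determine each other
    (∀ v : Fin (n + 2) → Bool, 0 < π v → v i₁ = v i₂) ∧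
    -- π is 1-dimensionally dependent
    (∀ i : Fin (n + 2), ∃ S : Finset (Fin (n + 2)), S.card = 1 ∧ i ∉ S ∧
      ∀ v w : Fin (n + 2) → Bool, 0 < π v → 0 < π w → (∀ j ∈ S, v j = w j) →
        ∀ b, condP π i v b = condP π i w b) ∧
    -- π is not a local Markov random field w.r.t. any graph of max degree < n/2
    (∀ G : SimpleGraph (Fin (n + 2)),
      (∀ x : Fin (n + 2), ((G.neighborSet x).ncard : ℝ) < (n : ℝ) / 2) →
      ¬ (∀ i : Fin (n + 2), ∀ v w : Fin (n + 2) → Bool, 0 < π v → 0 < π w →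
          (∀ j ∈ G.neighborSet i, v j = w j) →
          ∀ b, condP π i v b = condP π i w b)) := by
  classical
  have hle : n ≤ n + 2 := by omega
  have hne12 : i₁ ≠ i₂ := by
    intro h
    rw [h, hi₂] at hi₁
    omega
  have hcne₁ : ∀ i : Fin n, i₁ ≠ Fin.castLE hle i := by
    intro i h
    have hh : (i₁ : ℕ) = (i : ℕ) := congrArg Fin.val h
    have := i.isLt
    omega
  have hcne₂ : ∀ i : Fin n, i₂ ≠ Fin.castLE hle i := by
    intro i h
    have hh : (i₂ : ℕ) = (i : ℕ) := congrArg Fin.val h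
    have := i.isLt
    omega
  have hπ' : ∀ v : Fin (n + 2) → Bool, v i₁ = v i₂ →
      π v = pv (v i₁) * ∏ j : Fin n, q j (v i₁) (v (Fin.castLE hle j)) := by
    intro v h
    rw [hπ v, if_pos h]
  have hzero : ∀ v : Fin (n + 2) → Bool, v i₁ ≠ v i₂ → π v = 0 := by
    intro v h
    rw [hπ v, if_neg h]
  have hpos : ∀ v : Fin (n + 2) → Bool, v i₁ = v i₂ → 0 < π v := by
    intro v h
    rw [hπ' v h]
    exact mul_pos (hpv _) (Finset.prod_pos fun j _ => hq j _ _)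
  have key0 : ∀ v : Fin (n + 2) → Bool, 0 < π v → v i₁ = v i₂ := by
    intro v hv
    by_contra h
    rw [hzero v h] at hv
    exact lt_irrefl 0 hv
  -- conditional law of a coordinate i < n
  have key1 : ∀ (i : Fin n) (v : Fin (n + 2) → Bool) (b : Bool), v i₁ = v i₂ →
      condP π (Fin.castLE hle i) v b = q i (v i₁) b := by
    intro i v b hv
    have hupd : ∀ b' : Bool, π (Function.update v (Fin.castLE hle i) b') =
        (pv (v i₁) * ∏ j ∈ Finset.univ.erase i, q j (v i₁) (v (Fin.castLE hle j))) *
          q i (v i₁) b' := by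
      intro b'
      have h1 : Function.update v (Fin.castLE hle i) b' i₁ = v i₁ :=
        Function.update_of_ne (hcne₁ i) _ _
      have h2 : Function.update v (Fin.castLE hle i) b' i₂ = v i₂ :=
        Function.update_of_ne (hcne₂ i) _ _
      rw [hπ' _ (by rw [h1, h2]; exact hv), h1]
      have h3 : (∏ j : Fin n, q j (v i₁)
            (Function.update v (Fin.castLE hle i) b' (Fin.castLE hle j)))
          = q i (v i₁) b' * ∏ j ∈ Finset.univ.erase i, q j (v i₁) (v (Fin.castLE hle j)) := by
        rw [← Finset.mul_prod_erase Finset.univ _ (Finset.mem_univ i)]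
        congr 1
        · rw [Function.update_self]
        · refine Finset.prod_congr rfl fun j hj => ?_
          rw [Function.update_of_ne
            (fun hcc => (Finset.mem_erase.mp hj).1 (Fin.castLE_injective hle hcc))]
      rw [h3]
      ring
    have hK : 0 < pv (v i₁) * ∏ j ∈ Finset.univ.erase i, q j (v i₁) (v (Fin.castLE hle j)) :=
      mul_pos (hpv _) (Finset.prod_pos fun j _ => hq j _ _)
    unfold condP
    rw [hupd, hupd, hupd, ← mul_add, hq1, mul_one, mul_comm, mul_div_assoc,
      div_self hK.ne', mul_one]
  -- conditional law of coordinate i₁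
  have key2a : ∀ (v : Fin (n + 2) → Bool) (b : Bool),
      condP π i₁ v b = if b = v i₂ then 1 else 0 := by
    intro v b
    have hupd : ∀ b' : Bool, π (Function.update v i₁ b') =
        if b' = v i₂ then pv b' * ∏ j : Fin n, q j b' (v (Fin.castLE hle j)) else 0 := by
      intro b'
      have h1 : Function.update v i₁ b' i₁ = b' := Function.update_self _ _ _
      have h2 : Function.update v i₁ b' i₂ = v i₂ := Function.update_of_ne hne12.symm _ _
      have h3 : ∀ j : Fin n, Function.update v i₁ b' (Fin.castLE hle j) = v (Fin.castLE hle j) :=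
        fun j => Function.update_of_ne (hcne₁ j).symm _ _
      rw [hπ]
      simp only [h1, h2, h3]
    have hD : ∀ a : Bool, 0 < pv a * ∏ j : Fin n, q j a (v (Fin.castLE hle j)) :=
      fun a => mul_pos (hpv _) (Finset.prod_pos fun j _ => hq j _ _)
    unfold condP
    rw [hupd, hupd, hupd]
    cases hv2 : v i₂ <;> cases b <;>
      simp [hv2, (hD true).ne', (hD false).ne', div_self]
  -- conditional law of coordinate i₂
  have key2b : ∀ (v : Fin (n + 2) → Bool) (b : Bool),
      condP π i₂ v b = if v i₁ = b then 1 else 0 := by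
    intro v b
    have hupd : ∀ b' : Bool, π (Function.update v i₂ b') =
        if v i₁ = b' then pv (v i₁) * ∏ j : Fin n, q j (v i₁) (v (Fin.castLE hle j)) else 0 := by
      intro b'
      have h1 : Function.update v i₂ b' i₁ = v i₁ := Function.update_of_ne hne12 _ _
      have h2 : Function.update v i₂ b' i₂ = b' := Function.update_self _ _ _
      have h3 : ∀ j : Fin n, Function.update v i₂ b' (Fin.castLE hle j) = v (Fin.castLE hle j) :=
        fun j => Function.update_of_ne (hcne₂ j).symm _ _
      rw [hπ]
      simp only [h1, h2, h3]
    have hD : ∀ a : Bool, 0 < pv a * ∏ j : Fin n, q j a (v (Fin.castLE hle j)) :=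
      fun a => mul_pos (hpv _) (Finset.prod_pos fun j _ => hq j _ _)
    unfold condP
    rw [hupd, hupd, hupd]
    cases hv1 : v i₁ <;> cases b <;>
      simp [hv1, (hD true).ne', (hD false).ne', div_self]
  refine ⟨?_, key0, ?_, ?_⟩
  · -- conjunct 1
    intro i v w hv hw hvw b
    rw [key1 i v b (key0 v hv), key1 i w b (key0 w hw), hvw]
  · -- conjunct 3 : 1-dimensional dependence
    intro i
    rcases lt_trichotomy (i : ℕ) n with h | h | h
    · refine ⟨{i₁}, Finset.card_singleton _, ?_, ?_⟩
      · simp only [Finset.mem_singleton]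
        intro h'
        rw [h', hi₁] at h
        omega
      · intro v w hv hw hS b
        have e : i = Fin.castLE hle ⟨(i : ℕ), h⟩ := Fin.val_injective rfl
        rw [e, key1 _ v b (key0 v hv), key1 _ w b (key0 w hw),
          hS i₁ (Finset.mem_singleton_self i₁)]
    · have e : i = i₁ := Fin.val_injective (by rw [h, hi₁])
      refine ⟨{i₂}, Finset.card_singleton _, ?_, ?_⟩
      · simp only [Finset.mem_singleton]
        rw [e]; exact hne12
      · intro v w hv hw hS b
        rw [e, key2a, key2a, hS i₂ (Finset.mem_singleton_self i₂)]
    · have e : i = i₂ := Fin.val_injective (by have := i.isLt; omega)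
      refine ⟨{i₁}, Finset.card_singleton _, ?_, ?_⟩
      · simp only [Finset.mem_singleton]
        rw [e]; exact hne12.symm
      · intro v w hv hw hS b
        rw [e, key2b, key2b, hS i₁ (Finset.mem_singleton_self i₁)]
  · -- conjunct 4 : not a local MRF for small-degree graphs
    intro G hdeg h
    have hmem : ∀ i : Fin n, Fin.castLE hle i ∈ G.neighborSet i₁ ∪ G.neighborSet i₂ := by
      intro i
      by_contra hcon
      simp only [Set.mem_union, SimpleGraph.mem_neighborSet, not_or] at hcon
      set v : Fin (n + 2) → Bool := fun _ => true with hvdef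
      set w : Fin (n + 2) → Bool := Function.update (Function.update v i₁ false) i₂ false
        with hwdef
      have hv₁ : v i₁ = true := rfl
      have hv₂ : v i₂ = true := rfl
      have hw₁ : w i₁ = false := by
        rw [hwdef, Function.update_of_ne hne12, Function.update_self]
      have hw₂ : w i₂ = false := Function.update_self _ _ _
      have hposv : 0 < π v := hpos v rfl
      have hposw : 0 < π w := hpos w (by rw [hw₁, hw₂])
      have hagree : ∀ j ∈ G.neighborSet (Fin.castLE hle i), v j = w j := by
        intro j hj
        have hadj : G.Adj (Fin.castLE hle i) j := (G.mem_neighborSet _ _).mp hj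
        have hj1 : j ≠ i₁ := fun e => hcon.1 (e ▸ hadj).symm
        have hj2 : j ≠ i₂ := fun e => hcon.2 (e ▸ hadj).symm
        rw [hwdef, Function.update_of_ne hj2, Function.update_of_ne hj1]
      have hqeq : ∀ b, q i true b = q i false b := by
        intro b
        have e := h (Fin.castLE hle i) v w hposv hposw hagree b
        rw [key1 i v b rfl, key1 i w b (by rw [hw₁, hw₂]), hv₁, hw₁] at e
        exact e
      exact hdist i i true false (by simp) (funext hqeq)
    have hsub : Set.range (Fin.castLE hle : Fin n → Fin (n + 2)) ⊆
        G.neighborSet i₁ ∪ G.neighborSet i₂ := by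
      rintro x ⟨i, rfl⟩
      exact hmem i
    have hcard : n ≤ (G.neighborSet i₁ ∪ G.neighborSet i₂).ncard := by
      have h1 : (Set.range (Fin.castLE hle : Fin n → Fin (n + 2))).ncard = n := by
        rw [← Nat.card_coe_set_eq, Nat.card_range_of_injective (Fin.castLE_injective hle)]
        simp
      calc n = _ := h1.symm
        _ ≤ _ := Set.ncard_le_ncard hsub (Set.toFinite _)
    have h4 := Set.ncard_union_le (G.neighborSet i₁) (G.neighborSet i₂)
    have d1 := hdeg i₁
    have d2 := hdeg i₂
    have hc1 : (n : ℝ) ≤ ((G.neighborSet i₁ ∪ G.neighborSet i₂).ncard : ℝ) := by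
      exact_mod_cast hcard
    have hc2 : ((G.neighborSet i₁ ∪ G.neighborSet i₂).ncard : ℝ) ≤
        ((G.neighborSet i₁).ncard : ℝ) + ((G.neighborSet i₂).ncard : ℝ) := by
      exact_mod_cast h4
    linarith
end
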